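/- arXiv:1603.00271 — 2 statements merged into one kernel-verified Lean document; each statement's English description precedes it below -/
import Mathlib

section
/- Let σ₀, σ̂₀ > 0, let Σ ∈ ℝ^{3×3}, g₁, g₂ ∈ ℝ, and let ṗ ∈ ℝ^{3×3} with tr ṗ = 0 and γ̇, ω̇ ∈ ℝ. Assume the primal flow-rule (subdifferential) inequality: for every q ∈ ℝ^{3×3} with tr q = 0 and every η, β ∈ ℝ, Δ(q, η, β) ≥ Δ(ṗ, γ̇, ω̇) + ⟨Σ, q − ṗ⟩ + g₁(η − γ̇) + g₂(β − ω̇). Then the pointwise reduced dissipation inequality holds: ⟨dev sym Σ, sym ṗ⟩ + ⟨skew Σ, skew ṗ⟩ + g₁·γ̇ + g₂·ω̇ ≥ Δ(ṗ, γ̇, ω̇) ≥ 0. -/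
open Matrix

noncomputable section

abbrev M3 := Matrix (Fin 3) (Fin 3) ℝ

def msym (X : M3) : M3 := (1/2 : ℝ) • (X + Xᵀ)

def mskew (X : M3) : M3 := (1/2 : ℝ) • (X - Xᵀ)

def mdev (X : M3) : M3 := X - (X.trace / 3) • (1 : M3)

def minner (A B : M3) : ℝ := (A * Bᵀ).trace

def mnorm (A : M3) : ℝ := Real.sqrt (minner A A)

/-- The dissipation function, as an extended-real-valued function:
`Δ(q, η, β) = √(σ₀²‖sym q‖² + σ̂₀²‖skew q‖²)` if `‖sym q‖ ≤ η` and `‖skew q‖ ≤ β`,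
and `+∞` otherwise. -/
def Δdis (s0 sh0 : ℝ) (q : M3) (η β : ℝ) : EReal :=
  if mnorm (msym q) ≤ η ∧ mnorm (mskew q) ≤ β then
    ((Real.sqrt (s0 ^ 2 * (mnorm (msym q)) ^ 2 + sh0 ^ 2 * (mnorm (mskew q)) ^ 2) : ℝ) : EReal)
  else ⊤

lemma minner_decomp (S pdot : M3) (htr : pdot.trace = 0) :
    minner S pdot = minner (mdev (msym S)) (msym pdot) + minner (mskew S) (mskew pdot) := by
  simp only [Matrix.trace, Matrix.diag, Fin.sum_univ_three] at htr
  simp only [minner, msym, mskew, mdev, Matrix.trace, Matrix.diag, Fin.sum_univ_three,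
    Matrix.mul_apply, Matrix.sub_apply, Matrix.add_apply, Matrix.smul_apply,
    Matrix.transpose_apply, Matrix.one_apply, smul_eq_mul]
  norm_num [Fin.ext_iff]
  linear_combination ((S 0 0 + S 1 1 + S 2 2) / 3) * htr

lemma Δdis_zero (s0 sh0 : ℝ) : Δdis s0 sh0 0 0 0 = (0 : EReal) := by
  have h1 : msym 0 = (0 : M3) := by simp [msym]
  have h2 : mskew 0 = (0 : M3) := by simp [mskew]
  have h3 : mnorm (0 : M3) = 0 := by simp [mnorm, minner]
  simp [Δdis, h1, h2, h3]

/-- The primal flow rule (subdifferential inclusion) implies the pointwise reduced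
dissipation inequality
`⟨dev sym Σ, sym ṗ⟩ + ⟨skew Σ, skew ṗ⟩ + g₁ γ̇ + g₂ ω̇ ≥ Δ(ṗ, γ̇, ω̇) ≥ 0`. -/
theorem flow_rule_implies_dissipation_inequality (s0 sh0 : ℝ) (hs0 : 0 < s0) (hsh0 : 0 < sh0)
    (S pdot : M3) (g1 g2 gdot wdot : ℝ) (htr : pdot.trace = 0)
    (hflow : ∀ q : M3, q.trace = 0 → ∀ η β : ℝ,
      Δdis s0 sh0 q η β ≥ Δdis s0 sh0 pdot gdot wdot +
        ((minner S (q - pdot) + g1 * (η - gdot) + g2 * (β - wdot) : ℝ) : EReal)) :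
    ((minner (mdev (msym S)) (msym pdot) + minner (mskew S) (mskew pdot) +
        g1 * gdot + g2 * wdot : ℝ) : EReal) ≥ Δdis s0 sh0 pdot gdot wdot ∧
      Δdis s0 sh0 pdot gdot wdot ≥ 0 := by
  have hf := hflow 0 (by simp) 0 0
  rw [Δdis_zero] at hf
  have hc : mnorm (msym pdot) ≤ gdot ∧ mnorm (mskew pdot) ≤ wdot := by
    by_contra h
    rw [Δdis, if_neg h, EReal.top_add_coe] at hf
    exact (not_le.mpr (lt_of_lt_of_le EReal.zero_lt_top (le_of_eq rfl))) hf
  set r : ℝ := Real.sqrt (s0 ^ 2 * (mnorm (msym pdot)) ^ 2 + sh0 ^ 2 * (mnorm (mskew pdot)) ^ 2)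
    with hr
  have hΔ : Δdis s0 sh0 pdot gdot wdot = (r : EReal) := by rw [Δdis, if_pos hc]
  rw [hΔ] at hf ⊢
  have hminner : minner S (0 - pdot) = -(minner (mdev (msym S)) (msym pdot) +
      minner (mskew S) (mskew pdot)) := by
    have : minner S (0 - pdot) = -minner S pdot := by
      simp [minner, Matrix.mul_sub, Matrix.transpose_sub]
    rw [this, minner_decomp S pdot htr]
  rw [hminner] at hf
  have hf' : (0 : ℝ) ≥ r + (-(minner (mdev (msym S)) (msym pdot) +
      minner (mskew S) (mskew pdot)) + g1 * (0 - gdot) + g2 * (0 - wdot)) := by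
    rw [← EReal.coe_add] at hf
    exact_mod_cast hf
  constructor
  · exact_mod_cast (by linarith : minner (mdev (msym S)) (msym pdot) +
      minner (mskew S) (mskew pdot) + g1 * gdot + g2 * wdot ≥ r)
  · exact_mod_cast Real.sqrt_nonneg _
end
end

section
/- Let σ₀, σ̂₀ > 0 and let (Σ, g₁, g₂) ∈ E be a point on the branch S₁ of the yield surface, i.e. ‖dev sym Σ‖ + g₁ = σ₀ and ‖skew Σ‖ + g₂ ≤ 0, with dev sym Σ ≠ 0. For λ ≥ 0 set ṗ = λ·(dev sym Σ)/‖dev sym Σ‖, γ̇ = λ, ω̇ = 0. Then (ṗ, γ̇, ω̇) lies in the normal cone to E at (Σ, g₁, g₂): for every (Σ̄, ḡ₁, ḡ₂) ∈ E, ⟨ṗ, Σ̄ − Σ⟩ + γ̇(ḡ₁ − g₁) + ω̇(ḡ₂ − g₂) ≤ 0. -/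
open Matrix

noncomputable section

/-- The set `K = K₁ ∪ K₂ ∪ K₃` of the paper. -/
def Kset (s0 sh0 : ℝ) : Set (ℝ × ℝ) :=
  {p | p.1 ≤ s0 ∧ p.2 ≤ 0} ∪ {p | p.1 ≤ 0 ∧ p.2 ≤ sh0} ∪
    {p | 0 ≤ p.1 ∧ 0 ≤ p.2 ∧ p.1 ^ 2 / s0 ^ 2 + p.2 ^ 2 / sh0 ^ 2 ≤ 1}

/-- The set `E` of admissible generalized stresses. -/
def Eset (s0 sh0 : ℝ) : Set (M3 × ℝ × ℝ) :=
  {x | x.2.1 ≤ 0 ∧ x.2.2 ≤ 0 ∧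
    (mnorm (mdev (msym x.1)) + x.2.1, mnorm (mskew x.1) + x.2.2) ∈ Kset s0 sh0}

-- auxiliary lemmas
lemma minner_eq_sum (A B : M3) : minner A B = ∑ p : Fin 3 × Fin 3, A p.1 p.2 * B p.1 p.2 := by
  simp [minner, Matrix.trace, Matrix.diag, Matrix.mul_apply, Fintype.sum_prod_type]

lemma minner_self_nonneg (A : M3) : 0 ≤ minner A A := by
  rw [minner_eq_sum]
  exact Finset.sum_nonneg fun p _ => mul_self_nonneg _

lemma minner_smul_left (c : ℝ) (A B : M3) : minner (c • A) B = c * minner A B := by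
  simp [minner, Matrix.smul_mul, Matrix.trace_smul, smul_eq_mul]

lemma minner_sub_right (A B C : M3) : minner A (B - C) = minner A B - minner A C := by
  simp [minner, Matrix.transpose_sub, Matrix.mul_sub]

lemma minner_self_pos (A : M3) (hA : A ≠ 0) : 0 < minner A A := by
  rw [minner_eq_sum]
  obtain ⟨i, j, hij⟩ : ∃ i j, A i j ≠ 0 := by
    by_contra h
    push_neg at h
    exact hA (by ext i j; simp [h])
  exact Finset.sum_pos' (fun p _ => mul_self_nonneg _)
    ⟨(i, j), Finset.mem_univ _, mul_self_pos.mpr hij⟩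

lemma mnorm_pos (A : M3) (hA : A ≠ 0) : 0 < mnorm A :=
  Real.sqrt_pos.mpr (minner_self_pos A hA)

lemma minner_self_eq_sq (A : M3) : minner A A = mnorm A ^ 2 := by
  rw [mnorm, Real.sq_sqrt (minner_self_nonneg A)]

lemma minner_le_norm (A B : M3) : minner A B ≤ mnorm A * mnorm B := by
  rw [minner_eq_sum, mnorm, mnorm, minner_eq_sum, minner_eq_sum]
  calc ∑ p : Fin 3 × Fin 3, A p.1 p.2 * B p.1 p.2
      ≤ Real.sqrt (∑ p : Fin 3 × Fin 3, A p.1 p.2 ^ 2) *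
        Real.sqrt (∑ p : Fin 3 × Fin 3, B p.1 p.2 ^ 2) :=
        Real.sum_mul_le_sqrt_mul_sqrt _ _ _
    _ = _ := by rw [show (∑ p : Fin 3 × Fin 3, A p.1 p.2 ^ 2) = ∑ p : Fin 3 × Fin 3, A p.1 p.2 * A p.1 p.2 from Finset.sum_congr rfl fun p _ => sq (A p.1 p.2) ▸ by ring,
        show (∑ p : Fin 3 × Fin 3, B p.1 p.2 ^ 2) = ∑ p : Fin 3 × Fin 3, B p.1 p.2 * B p.1 p.2 from Finset.sum_congr rfl fun p _ => by ring]

lemma trace_one_3 : (1 : M3).trace = 3 := by simp [Matrix.trace_one]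

-- D symmetric, trace zero => minner D X = minner D (mdev (msym X))
lemma minner_dev_sym (D X : M3) (hD : Dᵀ = D) (htr : D.trace = 0) :
    minner D (mdev (msym X)) = minner D X := by
  have hDx : (D * X).trace = (D * Xᵀ).trace := by
    conv_lhs => rw [← Matrix.trace_transpose (D * X)]
    rw [Matrix.transpose_mul, hD, Matrix.trace_mul_comm]
  simp only [minner, mdev, msym, Matrix.transpose_sub, Matrix.transpose_smul,
    Matrix.transpose_add, Matrix.transpose_transpose, Matrix.transpose_one,
    Matrix.mul_sub, Matrix.mul_smul, Matrix.trace_sub, Matrix.trace_smul,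
    Matrix.mul_add, Matrix.trace_add, Matrix.mul_one, smul_eq_mul]
  rw [hDx]
  rw [htr]
  ring

lemma sym_transpose (X : M3) : (msym X)ᵀ = msym X := by
  simp [msym, Matrix.transpose_add, add_comm]

lemma dev_transpose (X : M3) (hX : Xᵀ = X) : (mdev X)ᵀ = mdev X := by
  simp [mdev, Matrix.transpose_sub, hX]

lemma dev_trace (X : M3) : (mdev X).trace = 0 := by
  simp [mdev, Matrix.trace_sub, Matrix.trace_smul, trace_one_3, smul_eq_mul]

lemma K_fst_le (s0 sh0 a b : ℝ) (hs0 : 0 < s0) (hsh0 : 0 < sh0)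
    (h : (a, b) ∈ Kset s0 sh0) : a ≤ s0 := by
  rcases h with (h | h) | h
  · exact h.1
  · exact h.1.trans hs0.le
  · obtain ⟨ha, hb, hab⟩ := h
    simp only at ha hb hab
    have hb2 : 0 ≤ b ^ 2 / sh0 ^ 2 := by positivity
    have h1 : a ^ 2 / s0 ^ 2 ≤ 1 := by linarith
    have h2 : a ^ 2 ≤ s0 ^ 2 := by
      rwa [div_le_one (by positivity)] at h1
    nlinarith


/-- Dual flow rule on the branch `S₁` of the yield surface: the rate
`(ṗ, γ̇, ω̇) = (λ·(dev sym Σ)/‖dev sym Σ‖, λ, 0)` lies in the normal cone to `E`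
at `(Σ, g₁, g₂)`. -/
theorem flow_rule_on_S1 (s0 sh0 : ℝ) (hs0 : 0 < s0) (hsh0 : 0 < sh0)
    (S : M3) (g1 g2 : ℝ) (hE : (S, g1, g2) ∈ Eset s0 sh0)
    (hS1a : mnorm (mdev (msym S)) + g1 = s0)
    (hS1b : mnorm (mskew S) + g2 ≤ 0)
    (hdev : mdev (msym S) ≠ 0)
    (lam : ℝ) (hlam : 0 ≤ lam) :
    ∀ S' : M3, ∀ g1' g2' : ℝ, (S', g1', g2') ∈ Eset s0 sh0 →
      minner ((lam / mnorm (mdev (msym S))) • mdev (msym S)) (S' - S) +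
        lam * (g1' - g1) + 0 * (g2' - g2) ≤ 0 := by
  intro S' g1' g2' hE'
  set D := mdev (msym S) with hDdef
  set D' := mdev (msym S') with hD'def
  set n := mnorm D with hn
  have hDt : Dᵀ = D := dev_transpose _ (sym_transpose S)
  have hDtr : D.trace = 0 := dev_trace _
  have hnpos : 0 < n := mnorm_pos _ hdev
  have hDS : minner D S = n ^ 2 := by
    rw [← minner_dev_sym D S hDt hDtr, ← hDdef, minner_self_eq_sq]
  have hDS' : minner D S' ≤ n * mnorm D' := by
    rw [← minner_dev_sym D S' hDt hDtr]
    exact minner_le_norm _ _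
  have hK : mnorm D' + g1' ≤ s0 := K_fst_le s0 sh0 _ _ hs0 hsh0 hE'.2.2
  rw [minner_smul_left, minner_sub_right]
  have h1 : lam / n * (minner D S' - minner D S) ≤ lam * (mnorm D' - n) := by
    have : minner D S' - minner D S ≤ n * (mnorm D' - n) := by
      rw [hDS]; nlinarith
    calc lam / n * (minner D S' - minner D S) ≤ lam / n * (n * (mnorm D' - n)) := by
          apply mul_le_mul_of_nonneg_left this (div_nonneg hlam hnpos.le)
      _ = lam * (mnorm D' - n) := by field_simp
  nlinarith [mul_le_mul_of_nonneg_left (sub_nonpos.mpr hK) hlam]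
end
end
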